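/- arXiv:2204.00530 — 4 statements merged into one kernel-verified Lean document; each statement's English description precedes it below -/
import Mathlib

section
/- Let k, r, γ > 0 and let q₁ < 0 < 1 < q₂ be the roots of k q² - (k+r-γ) q - γ = 0. Then q₁ < ((γ-2r+k)/r² + 1/r) / ((γ-2r+k)/r² + 1/γ) < q₂, provided (γ-2r+k)/r² + 1/γ > 0. -/
theorem stmt_3 (k r γ : ℝ) (hk : 0 < k) (hr : 0 < r) (hγ : 0 < γ)
    (q₁ q₂ : ℝ)
    (hq₁ : q₁ = (k + r - γ - Real.sqrt ((k + r - γ) ^ 2 + 4 * k * γ)) / (2 * k))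
    (hq₂ : q₂ = (k + r - γ + Real.sqrt ((k + r - γ) ^ 2 + 4 * k * γ)) / (2 * k))
    (hB : 0 < (γ - 2 * r + k) / r ^ 2 + 1 / γ) :
    q₁ < ((γ - 2 * r + k) / r ^ 2 + 1 / r) / ((γ - 2 * r + k) / r ^ 2 + 1 / γ) ∧
      ((γ - 2 * r + k) / r ^ 2 + 1 / r) / ((γ - 2 * r + k) / r ^ 2 + 1 / γ) < q₂ := by
  set A : ℝ := (γ - 2 * r + k) / r ^ 2 + 1 / r with hA
  set B : ℝ := (γ - 2 * r + k) / r ^ 2 + 1 / γ with hBdef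
  set m : ℝ := A / B with hm
  have hD : 0 ≤ (k + r - γ) ^ 2 + 4 * k * γ := by positivity
  set s : ℝ := Real.sqrt ((k + r - γ) ^ 2 + 4 * k * γ) with hs
  have hs0 : 0 ≤ s := Real.sqrt_nonneg _
  have hs2 : s ^ 2 = (k + r - γ) ^ 2 + 4 * k * γ := Real.sq_sqrt hD
  have hBne : B ≠ 0 := ne_of_gt hB
  have hid : k * A ^ 2 - (k + r - γ) * A * B - γ * B ^ 2 = -(k ^ 2 / (r ^ 2 * γ)) := by
    rw [hA, hBdef]
    field_simp
    ring
  have key : k * m ^ 2 - (k + r - γ) * m - γ < 0 := by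
    have h2 : k * m ^ 2 - (k + r - γ) * m - γ
        = (k * A ^ 2 - (k + r - γ) * A * B - γ * B ^ 2) / B ^ 2 := by
      rw [hm]; field_simp
    rw [h2, hid]
    have : 0 < k ^ 2 / (r ^ 2 * γ) / B ^ 2 := by positivity
    have hB2 : (0:ℝ) < B ^ 2 := by positivity
    rw [neg_div]
    linarith
  clear_value A B m
  clear hid hA hBdef hm
  have ht : (2 * k * m - (k + r - γ)) ^ 2 < s ^ 2 := by
    rw [hs2]; nlinarith [key, hk]
  clear_value s
  clear hs hs2 hD key
  have h1 : 2 * k * m - (k + r - γ) < s := by nlinarith [sq_nonneg (2 * k * m - (k + r - γ) - s)]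
  have h2 : -s < 2 * k * m - (k + r - γ) := by nlinarith [sq_nonneg (2 * k * m - (k + r - γ) + s)]
  have h2k : (0:ℝ) < 2 * k := by linarith
  constructor
  · rw [hq₁, div_lt_iff₀ h2k]
    linarith
  · rw [hq₂, lt_div_iff₀ h2k]
    linarith
end

section
/- Fix h > 0, 0 < λ < α < 1, β₁, β₂ > 0, y > 0. The maximizer over c ∈ [λh, h] of c ↦ U(c,h) - c·y is: c* = λh if y ≥ e^{(α-λ)β₁h}; c* = -(1/β₁)ln(y) + αh if 1 ≤ y < e^{(α-λ)β₁h}; c* = -(1/β₂)ln(y) + αh if e^{-(1-α)β₂h} ≤ y < 1; and c* = h if 0 < y < e^{-(1-α)β₂h}. -/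
lemma core_aux (β a b : ℝ) (hβ : 0 < β) :
    (1/β)*(1 - Real.exp (-β*a)) ≤ (1/β)*(1 - Real.exp (-β*b)) + Real.exp (-β*b) * (a - b) := by
  have h1 : Real.exp (-β*a) = Real.exp (-β*b) * Real.exp (-β*(a-b)) := by
    rw [← Real.exp_add]; ring_nf
  have h2 := Real.add_one_le_exp (-β*(a-b))
  have h3 := (Real.exp_pos (-β*b)).le
  have key : Real.exp (-β*b) - Real.exp (-β*a) ≤ β * (Real.exp (-β*b) * (a-b)) := by
    nlinarith [mul_le_mul_of_nonneg_left h2 h3]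
  have h6 : (1/β)*(β * (Real.exp (-β*b) * (a-b))) = Real.exp (-β*b) * (a-b) := by
    field_simp
  have h7 := mul_le_mul_of_nonneg_left key (le_of_lt (one_div_pos.mpr hβ))
  rw [h6] at h7
  linarith [h7]

lemma aux_le (β a : ℝ) (hβ : 0 < β) : (1/β)*(1 - Real.exp (-β*a)) ≤ a := by
  have h2 := Real.add_one_le_exp (-β*a)
  have := Real.exp_pos (-β*a)
  rw [div_mul_eq_mul_div, div_le_iff₀ hβ]
  nlinarith

lemma aux_tan0 (β b : ℝ) (hβ : 0 < β) :
    0 ≤ (1/β)*(1 - Real.exp (-β*b)) - Real.exp (-β*b) * b := by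
  have h2 := Real.add_one_le_exp (β*b)
  have h3 := (Real.exp_pos (-β*b)).le
  have h4 : Real.exp (-β*b) * Real.exp (β*b) = 1 := by
    rw [← Real.exp_add]; ring_nf; exact Real.exp_zero
  have key : β * (Real.exp (-β*b) * b) ≤ 1 - Real.exp (-β*b) := by
    nlinarith [mul_le_mul_of_nonneg_left h2 h3]
  have h6 : (1/β)*(β * (Real.exp (-β*b) * b)) = Real.exp (-β*b) * b := by
    field_simp
  have h7 := mul_le_mul_of_nonneg_left key (le_of_lt (one_div_pos.mpr hβ))
  rw [h6] at h7
  linarith [h7]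

theorem stmt_6 (α lam h β₁ β₂ y : ℝ) (hlam : 0 < lam) (hlamα : lam < α) (hα : α < 1)
    (hh : 0 < h) (hβ₁ : 0 < β₁) (hβ₂ : 0 < β₂) (hy : 0 < y)
    (U : ℝ → ℝ)
    (hU : ∀ c, U c = if c < α * h then (1 / β₁) * (1 - Real.exp (-β₁ * (c - α * h)))
        else (1 / β₂) * (1 - Real.exp (-β₂ * (c - α * h))))
    (cstar : ℝ)
    (hcstar : cstar =
      if Real.exp ((α - lam) * β₁ * h) ≤ y then lam * h
      else if 1 ≤ y then -(1 / β₁) * Real.log y + α * h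
      else if Real.exp (-(1 - α) * β₂ * h) ≤ y then -(1 / β₂) * Real.log y + α * h
      else h) :
    cstar ∈ Set.Icc (lam * h) h ∧
      IsMaxOn (fun c => U c - c * y) (Set.Icc (lam * h) h) cstar := by
  -- supergradient
  set g : ℝ → ℝ := fun c => if c < α * h then Real.exp (-β₁ * (c - α * h))
      else Real.exp (-β₂ * (c - α * h)) with hg
  have tangent : ∀ x c : ℝ, U x ≤ U c + g c * (x - c) := by
    intro x c
    rw [hU x, hU c]
    by_cases hxu : x < α * h <;> by_cases hcu : c < α * h <;>
      simp only [hg, if_pos, if_neg, hxu, hcu, if_true, if_false]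
    · have := core_aux β₁ (x - α*h) (c - α*h) hβ₁
      have e : (x - α*h) - (c - α*h) = x - c := by ring
      rw [e] at this
      convert this using 3 <;> ring
    · -- x < αh ≤ c : piece 1 at x, piece 2 at c
      have h1 := aux_le β₁ (x - α*h) hβ₁
      have h2 := aux_tan0 β₂ (c - α*h) hβ₂
      have h3 : Real.exp (-β₂ * (c - α*h)) ≤ 1 := by
        rw [Real.exp_le_one_iff]
        nlinarith [not_lt.mp hcu]
      have h4 := (Real.exp_pos (-β₂ * (c - α*h))).le
      have e1 : (-β₁ * (x - α * h)) = -β₁*(x - α*h) := by ring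
      nlinarith [h1, h2, h3, h4, mul_le_mul_of_nonneg_right h3 (by linarith : (0:ℝ) ≤ α*h - x)]
    · -- c < αh ≤ x
      have h1 := aux_le β₂ (x - α*h) hβ₂
      have h2 := aux_tan0 β₁ (c - α*h) hβ₁
      have h3 : 1 ≤ Real.exp (-β₁ * (c - α*h)) := by
        rw [Real.one_le_exp_iff]
        nlinarith
      nlinarith [h1, h2, h3, mul_le_mul_of_nonneg_right h3 (by linarith [not_lt.mp hxu] : (0:ℝ) ≤ x - α*h)]
    · have := core_aux β₂ (x - α*h) (c - α*h) hβ₂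
      have e : (x - α*h) - (c - α*h) = x - c := by ring
      rw [e] at this
      convert this using 3 <;> ring
  -- helper: first-order condition implies max
  have main : ∀ G : ℝ, g cstar = G →
      (∀ x ∈ Set.Icc (lam*h) h, (G - y) * (x - cstar) ≤ 0) →
      IsMaxOn (fun c => U c - c*y) (Set.Icc (lam*h) h) cstar := by
    intro G hG hle
    rw [isMaxOn_iff]
    intro x hx
    have t := tangent x cstar
    rw [hG] at t
    have := hle x hx
    show U x - x * y ≤ U cstar - cstar * y
    nlinarith [t, this]
  split_ifs at hcstar with h1 h2 h3
  · -- y ≥ exp((α-lam)β₁h), cstar = lam*h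
    have hmem : cstar ∈ Set.Icc (lam*h) h := by
      rw [hcstar]; constructor
      · linarith
      · nlinarith
    refine ⟨hmem, main (Real.exp ((α - lam) * β₁ * h)) ?_ ?_⟩
    · simp only [hg, hcstar]
      rw [if_pos (by nlinarith), show -β₁*(lam*h - α*h) = (α-lam)*β₁*h from by ring]
    · intro x hx
      obtain ⟨hx1, hx2⟩ := hx
      rw [hcstar]
      have : x - lam*h ≥ 0 := by linarith
      nlinarith
  · -- 1 ≤ y < exp((α-lam)β₁h)
    have hy1 : 0 ≤ Real.log y := Real.log_nonneg h2
    have hy2 : Real.log y < (α - lam) * β₁ * h := by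
      have := Real.log_lt_log hy (lt_of_not_ge h1)
      rwa [Real.log_exp] at this
    have hd1 : (1/β₁) * Real.log y < (α - lam) * h := by
      rw [div_mul_eq_mul_div, div_lt_iff₀ hβ₁]; nlinarith
    have hd0 : 0 ≤ (1/β₁) * Real.log y :=
      mul_nonneg (le_of_lt (one_div_pos.mpr hβ₁)) hy1
    have hmem : cstar ∈ Set.Icc (lam*h) h := by
      rw [hcstar]; constructor
      · nlinarith
      · nlinarith
    refine ⟨hmem, main y ?_ ?_⟩
    · rcases eq_or_lt_of_le hy1 with hly | hly
      · have hy1' : y = 1 := by rw [← Real.exp_log hy, ← hly, Real.exp_zero]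
        have hc : cstar = α * h := by rw [hcstar, ← hly]; ring
        simp only [hg, hc]
        rw [if_neg (lt_irrefl _), show -β₂*(α*h - α*h) = 0 from by ring, Real.exp_zero, hy1']
      · have hc : cstar < α * h := by
          rw [hcstar]
          nlinarith [mul_pos (one_div_pos.mpr hβ₁) hly]
        simp only [hg]
        rw [if_pos hc, hcstar,
          show -β₁*(-(1/β₁)*Real.log y + α*h - α*h) = β₁ * (1/β₁) * Real.log y from by ring,
          mul_one_div_cancel hβ₁.ne', one_mul, Real.exp_log hy]
    · intro x hx; rw [sub_self, zero_mul]
  · -- exp(-(1-α)β₂h) ≤ y < 1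
    have hy1 : Real.log y < 0 := Real.log_neg hy (lt_of_not_ge h2)
    have hy2 : -(1 - α) * β₂ * h ≤ Real.log y := by
      have := Real.log_le_log (Real.exp_pos _) h3
      rwa [Real.log_exp] at this
    have hd1 : -((1/β₂) * Real.log y) ≤ (1 - α) * h := by
      rw [div_mul_eq_mul_div, ← neg_div, div_le_iff₀ hβ₂]; nlinarith
    have hd0 : 0 < -((1/β₂) * Real.log y) := by
      have := mul_pos (one_div_pos.mpr hβ₂) (neg_pos.mpr hy1)
      nlinarith
    have hmem : cstar ∈ Set.Icc (lam*h) h := by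
      rw [hcstar]; constructor
      · nlinarith
      · nlinarith
    refine ⟨hmem, main y ?_ ?_⟩
    · have hc : ¬ (cstar < α * h) := by
        rw [hcstar]; push_neg; nlinarith
      simp only [hg]
      rw [if_neg hc, hcstar,
        show -β₂*(-(1/β₂)*Real.log y + α*h - α*h) = β₂ * (1/β₂) * Real.log y from by ring,
        mul_one_div_cancel hβ₂.ne', one_mul, Real.exp_log hy]
    · intro x hx; rw [sub_self, zero_mul]
  · -- y < exp(-(1-α)β₂h), cstar = h
    have hy2 : y < Real.exp (-(1 - α) * β₂ * h) := lt_of_not_ge h3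
    have hmem : cstar ∈ Set.Icc (lam*h) h := by
      rw [hcstar]; exact ⟨by nlinarith, le_refl h⟩
    refine ⟨hmem, main (Real.exp (-(1 - α) * β₂ * h)) ?_ ?_⟩
    · simp only [hg, hcstar]
      rw [if_neg (by push_neg; nlinarith), show -β₂*(h - α*h) = -(1-α)*β₂*h from by ring]
    · intro x hx
      obtain ⟨hx1, hx2⟩ := hx
      rw [hcstar]
      nlinarith
end

section
/- Fix h > 0, 0 < λ < α < 1, β₁, β₂ > 0. The dual function Ũ(y,h) := sup_{λh ≤ c ≤ h} (U(c,h) - c·y) equals: (1/β₁)(1 - e^{(α-λ)β₁h}) - λhy for y ≥ e^{(α-λ)β₁h}; (1/β₁)(1 - y + y ln y) - αhy for 1 ≤ y < e^{(α-λ)β₁h}; (1/β₂)(1 - y + y ln y) - αhy for e^{-(1-α)β₂h} ≤ y < 1; and (1/β₂)(1 - e^{-(1-α)β₂h}) - hy for 0 < y < e^{-(1-α)β₂h}. -/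
lemma key0 (t : ℝ) : 1 + t ≤ Real.exp t := by linarith [Real.add_one_le_exp t]

lemma keyY (y t : ℝ) (hy : 0 < y) : y * (1 + t - Real.log y) ≤ Real.exp t := by
  have h := key0 (t - Real.log y)
  have h2 := mul_le_mul_of_nonneg_left h hy.le
  calc y * (1 + t - Real.log y) = y * (1 + (t - Real.log y)) := by ring
    _ ≤ y * Real.exp (t - Real.log y) := h2
    _ = Real.exp t := by
        rw [Real.exp_sub, Real.exp_log hy]; field_simp

lemma gpos (y : ℝ) (hy : 0 < y) : 0 ≤ 1 - y + y * Real.log y := by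
  have h := keyY y 0 hy
  simp [Real.exp_zero] at h
  nlinarith [h]

lemma lemB (β d : ℝ) (hβ : 0 < β) : (1/β) * (1 - Real.exp (-β*d)) ≤ d := by
  have h := key0 (-β*d)
  have h2 : (1/β) * (1 - Real.exp (-β*d)) ≤ (1/β)*(β*d) :=
    mul_le_mul_of_nonneg_left (by linarith) (by positivity)
  calc (1/β) * (1 - Real.exp (-β*d)) ≤ (1/β)*(β*d) := h2
    _ = d := by field_simp

lemma lemA (β y d : ℝ) (hβ : 0 < β) (hy : 0 < y) :
    (1/β) * (1 - Real.exp (-β*d)) - d*y ≤ (1/β) * (1 - y + y*Real.log y) := by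
  have hk := keyY y (-β*d) hy
  have h2 := mul_le_mul_of_nonneg_left hk (by positivity : (0:ℝ) ≤ 1/β)
  have hid : (1/β) * (y*(1 + (-β*d) - Real.log y)) = (1/β)*(y - y*Real.log y) - d*y := by
    field_simp; ring
  rw [hid] at h2
  nlinarith [h2]

set_option maxHeartbeats 1000000 in
theorem stmt_7 (α lam h β₁ β₂ : ℝ) (hlam : 0 < lam) (hlamα : lam < α) (hα : α < 1)
    (hh : 0 < h) (hβ₁ : 0 < β₁) (hβ₂ : 0 < β₂)
    (U : ℝ → ℝ)
    (hU : ∀ c, U c = if c < α * h then (1 / β₁) * (1 - Real.exp (-β₁ * (c - α * h)))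
        else (1 / β₂) * (1 - Real.exp (-β₂ * (c - α * h))))
    (Ut : ℝ → ℝ)
    (hUt : ∀ y, 0 < y → Ut y =
      if Real.exp ((α - lam) * β₁ * h) ≤ y then
        (1 / β₁) * (1 - Real.exp ((α - lam) * β₁ * h)) - lam * h * y
      else if 1 ≤ y then (1 / β₁) * (1 - y + y * Real.log y) - α * h * y
      else if Real.exp (-(1 - α) * β₂ * h) ≤ y then
        (1 / β₂) * (1 - y + y * Real.log y) - α * h * y
      else (1 / β₂) * (1 - Real.exp (-(1 - α) * β₂ * h)) - h * y) :
    ∀ y, 0 < y →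
      IsGreatest ((fun c => U c - c * y) '' Set.Icc (lam * h) h) (Ut y) := by
  intro y hy
  rw [hUt y hy]
  have hαh1 : lam * h < α * h := by nlinarith
  have hαh2 : α * h < h := by nlinarith
  have hL1pos : 0 < (Real.exp ((α - lam) * β₁ * h)) := Real.exp_pos _
  have hL2pos : 0 < (Real.exp (-(1 - α) * β₂ * h)) := Real.exp_pos _
  have hL1ge : 1 + (α - lam) * β₁ * h ≤ (Real.exp ((α - lam) * β₁ * h)) := key0 _
  have hL2le : (Real.exp (-(1 - α) * β₂ * h)) ≤ 1 := by
    apply Real.exp_le_one_iff.mpr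
    nlinarith
  split_ifs with h1 h2 h3
  · -- case 1 : (Real.exp ((α - lam) * β₁ * h)) ≤ y, maximizer c = lam*h
    constructor
    · refine ⟨lam * h, ⟨le_refl _, by nlinarith⟩, ?_⟩
      dsimp only
      rw [hU (lam * h), if_pos hαh1]
      rw [show -β₁ * (lam * h - α * h) = (α - lam) * β₁ * h by ring]
    · rintro z ⟨c, ⟨hc1, hc2⟩, rfl⟩
      dsimp only
      rw [hU c]
      split_ifs with hcA
      · have he : Real.exp (-β₁ * (c - α * h)) = (Real.exp ((α - lam) * β₁ * h)) * Real.exp (-β₁ * (c - lam * h)) := by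
          rw [← Real.exp_add]; congr 1; ring
        have hB := lemB β₁ (c - lam * h) hβ₁
        have hint1 := mul_le_mul_of_nonneg_left hB hL1pos.le
        have hint2 : (Real.exp ((α - lam) * β₁ * h)) * (c - lam * h) ≤ y * (c - lam * h) :=
          mul_le_mul_of_nonneg_right h1 (by linarith)
        rw [he]
        linarith [hint1, hint2]
      · have hB := lemB β₂ (c - α * h) hβ₂
        push_neg at hcA
        have m1 : 0 ≤ (c - α * h) * (y - 1) :=
          mul_nonneg (by linarith) (by nlinarith)
        have m2 : 0 ≤ (α - lam) * h * (y - (Real.exp ((α - lam) * β₁ * h))) :=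
          mul_nonneg (by nlinarith) (by linarith)
        have hk := keyY (Real.exp ((α - lam) * β₁ * h)) 0 hL1pos
        rw [Real.exp_zero, Real.log_exp] at hk
        have m3 : (1/β₁) * ((Real.exp ((α - lam) * β₁ * h)) - 1) ≤ (α - lam) * h * (Real.exp ((α - lam) * β₁ * h)) := by
          have h2' : (1/β₁) * ((Real.exp ((α - lam) * β₁ * h)) - 1) ≤ (1/β₁) * ((Real.exp ((α - lam) * β₁ * h)) * ((α - lam) * β₁ * h)) :=
            mul_le_mul_of_nonneg_left (by nlinarith [hk]) (by positivity)
          have hid : (1/β₁) * ((Real.exp ((α - lam) * β₁ * h)) * ((α - lam) * β₁ * h)) = (α - lam) * h * (Real.exp ((α - lam) * β₁ * h)) := by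
            field_simp
          linarith [hid ▸ h2']
        have hbound : (1/β₂) * (1 - Real.exp (-β₂ * (c - α * h))) ≤ c - α * h := lemB β₂ _ hβ₂
        linarith [hbound, m1, m2, m3]
  · -- case 2 : y < (Real.exp ((α - lam) * β₁ * h)), 1 ≤ y, maximizer c* = α h - log y / β₁
    rw [not_le] at h1
    have hly0 : 0 ≤ Real.log y := Real.log_nonneg h2
    have hlyU : Real.log y < (α - lam) * β₁ * h := by
      have := Real.log_lt_log hy h1
      rwa [Real.log_exp] at this
    constructor
    · refine ⟨α * h - Real.log y / β₁, ⟨?_, ?_⟩, ?_⟩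
      · have : Real.log y / β₁ < (α - lam) * h := by
          rw [div_lt_iff₀ hβ₁]; nlinarith
        linarith
      · have : 0 ≤ Real.log y / β₁ := by positivity
        linarith
      · dsimp only
        rcases eq_or_lt_of_le h2 with hy1 | hy1
        · -- y = 1
          rw [← hy1]
          simp only [Real.log_one, zero_div, sub_zero]
          rw [hU (α * h), if_neg (lt_irrefl _)]
          simp [Real.exp_zero]
        · have hly : 0 < Real.log y := Real.log_pos hy1
          have hcA : α * h - Real.log y / β₁ < α * h := by
            have : 0 < Real.log y / β₁ := by positivity
            linarith
          rw [hU _, if_pos hcA]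
          have he : -β₁ * (α * h - Real.log y / β₁ - α * h) = Real.log y := by
            field_simp
            ring
          rw [he, Real.exp_log hy]
          ring
    · rintro z ⟨c, ⟨hc1, hc2⟩, rfl⟩
      dsimp only
      rw [hU c]
      split_ifs with hcA
      · have := lemA β₁ y (c - α * h) hβ₁ hy
        linarith
      · push_neg at hcA
        have hB := lemB β₂ (c - α * h) hβ₂
        have hg : 0 ≤ (1/β₁) * (1 - y + y * Real.log y) :=
          mul_nonneg (by positivity) (gpos y hy)
        have m1 : 0 ≤ (c - α * h) * (y - 1) := mul_nonneg (by linarith) (by linarith)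
        linarith [hB, hg, m1]
  · -- case 3 : (Real.exp (-(1 - α) * β₂ * h)) ≤ y < 1, maximizer c* = α h - log y / β₂
    rw [not_le] at h1 h2
    have hly0 : Real.log y < 0 := Real.log_neg hy h2
    have hlyL : -(1 - α) * β₂ * h ≤ Real.log y := by
      have := Real.log_le_log hL2pos h3
      rwa [Real.log_exp] at this
    constructor
    · refine ⟨α * h - Real.log y / β₂, ⟨?_, ?_⟩, ?_⟩
      · have : Real.log y / β₂ < 0 := div_neg_of_neg_of_pos hly0 hβ₂
        linarith
      · have : -((1 - α) * h) ≤ Real.log y / β₂ := by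
          rw [le_div_iff₀ hβ₂]; nlinarith
        linarith
      · dsimp only
        have hcA : ¬ (α * h - Real.log y / β₂ < α * h) := by
          have : Real.log y / β₂ < 0 := div_neg_of_neg_of_pos hly0 hβ₂
          push_neg; linarith
        rw [hU _, if_neg hcA]
        have he : -β₂ * (α * h - Real.log y / β₂ - α * h) = Real.log y := by
          field_simp
          ring
        rw [he, Real.exp_log hy]
        ring
    · rintro z ⟨c, ⟨hc1, hc2⟩, rfl⟩
      dsimp only
      rw [hU c]
      split_ifs with hcA
      · have hB := lemB β₁ (c - α * h) hβ₁
        have hg : 0 ≤ (1/β₂) * (1 - y + y * Real.log y) :=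
          mul_nonneg (by positivity) (gpos y hy)
        have m1 : 0 ≤ (α * h - c) * (1 - y) := mul_nonneg (by linarith) (by linarith)
        linarith [hB, hg, m1]
      · have := lemA β₂ y (c - α * h) hβ₂ hy
        linarith
  · -- case 4 : y < (Real.exp (-(1 - α) * β₂ * h)), maximizer c = h
    rw [not_le] at h1 h2 h3
    constructor
    · refine ⟨h, ⟨by nlinarith, le_refl _⟩, ?_⟩
      dsimp only
      rw [hU h, if_neg (by push_neg; linarith)]
      rw [show -β₂ * (h - α * h) = -(1 - α) * β₂ * h by ring]
    · rintro z ⟨c, ⟨hc1, hc2⟩, rfl⟩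
      dsimp only
      rw [hU c]
      split_ifs with hcA
      · have hB := lemB β₁ (c - α * h) hβ₁
        have m1 : 0 ≤ (α * h - c) * (1 - y) :=
          mul_nonneg (by linarith) (by nlinarith)
        have m2 : 0 ≤ (1 - α) * h * ((Real.exp (-(1 - α) * β₂ * h)) - y) :=
          mul_nonneg (by nlinarith) (by linarith)
        have hk : (Real.exp (-(1 - α) * β₂ * h)) * (1 + (1 - α) * β₂ * h) ≤ 1 := by
          have := key0 ((1 - α) * β₂ * h)
          have h2' := mul_le_mul_of_nonneg_left this hL2pos.le
          have : (Real.exp (-(1 - α) * β₂ * h)) * Real.exp ((1 - α) * β₂ * h) = 1 := by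
            rw [← Real.exp_add, show -(1 - α) * β₂ * h + (1 - α) * β₂ * h = (0:ℝ) by ring,
              Real.exp_zero]
          linarith [h2'.trans_eq this]
        have m3 : (1 - α) * h * (Real.exp (-(1 - α) * β₂ * h)) ≤ (1/β₂) * (1 - (Real.exp (-(1 - α) * β₂ * h))) := by
          have h2' : (1/β₂) * ((Real.exp (-(1 - α) * β₂ * h)) * ((1 - α) * β₂ * h)) ≤ (1/β₂) * (1 - (Real.exp (-(1 - α) * β₂ * h))) :=
            mul_le_mul_of_nonneg_left (by nlinarith) (by positivity)
          have hid : (1/β₂) * ((Real.exp (-(1 - α) * β₂ * h)) * ((1 - α) * β₂ * h)) = (1 - α) * h * (Real.exp (-(1 - α) * β₂ * h)) := by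
            field_simp
          linarith [hid ▸ h2']
        linarith [hB, m1, m2, m3]
      · push_neg at hcA
        have he : Real.exp (-β₂ * (c - α * h)) = (Real.exp (-(1 - α) * β₂ * h)) * Real.exp (-β₂ * (c - h)) := by
          rw [← Real.exp_add]; congr 1; ring
        have hB := lemB β₂ (c - h) hβ₂
        have hint1 := mul_le_mul_of_nonneg_left hB hL2pos.le
        have hint2 : (Real.exp (-(1 - α) * β₂ * h)) * (c - h) ≤ y * (c - h) :=
          mul_le_mul_of_nonpos_right h3.le (by linarith)
        rw [he]
        linarith [hint1, hint2]
end

section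
/- Let q₁ < 0 < 1 < q₂ and A, B ∈ ℝ with B < 0 and c > 0. Define ψ(y) = A·y^{q₁-1} + B·y^{q₂-1} + c for y > 0. Then ψ'(y) = A(q₁-1)y^{q₁-2} + B(q₂-1)y^{q₂-2}, and on any interval [a, b] ⊂ (0,∞), ψ is either monotone increasing, monotone decreasing, or first increasing then decreasing; consequently min_{y∈[a,b]} ψ(y) = min(ψ(a), ψ(b)). Hence if ψ(a) > 0 and ψ(b) > 0 then ψ(y) > 0 for all y ∈ [a,b]. -/
theorem stmt_12 (q₁ q₂ A B c : ℝ) (hq₁ : q₁ < 0) (hq₂ : 1 < q₂) (hB : B < 0) (hc : 0 < c)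
    (ψ : ℝ → ℝ) (hψ : ∀ y, ψ y = A * y ^ (q₁ - 1) + B * y ^ (q₂ - 1) + c) :
    (∀ y > (0 : ℝ),
        HasDerivAt ψ (A * (q₁ - 1) * y ^ (q₁ - 2) + B * (q₂ - 1) * y ^ (q₂ - 2)) y) ∧
    (∀ a b : ℝ, 0 < a → a ≤ b →
        MonotoneOn ψ (Set.Icc a b) ∨ AntitoneOn ψ (Set.Icc a b) ∨
          ∃ m ∈ Set.Icc a b, MonotoneOn ψ (Set.Icc a m) ∧ AntitoneOn ψ (Set.Icc m b)) ∧
    (∀ a b : ℝ, 0 < a → a ≤ b → ∀ y ∈ Set.Icc a b, min (ψ a) (ψ b) ≤ ψ y) ∧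
    (∀ a b : ℝ, 0 < a → a ≤ b → 0 < ψ a → 0 < ψ b → ∀ y ∈ Set.Icc a b, 0 < ψ y) := by
  have hψ' : ψ = fun y => A * y ^ (q₁ - 1) + B * y ^ (q₂ - 1) + c := funext hψ
  subst hψ'
  -- Part 1 : derivative
  have part1 : ∀ y > (0 : ℝ),
      HasDerivAt (fun y => A * y ^ (q₁ - 1) + B * y ^ (q₂ - 1) + c)
        (A * (q₁ - 1) * y ^ (q₁ - 2) + B * (q₂ - 1) * y ^ (q₂ - 2)) y := by
    intro y hy
    have h1 := (Real.hasDerivAt_rpow_const (x := y) (p := q₁ - 1) (Or.inl (ne_of_gt hy))).const_mul A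
    have h2 := (Real.hasDerivAt_rpow_const (x := y) (p := q₂ - 1) (Or.inl (ne_of_gt hy))).const_mul B
    have := (h1.add h2).add_const c
    exact this.congr_deriv (by ring_nf)
  -- key sign analysis : let g y = ψ' y
  set C := A * (q₁ - 1) with hC
  set D := B * (q₂ - 1) with hD
  have hDneg : D < 0 := mul_neg_of_neg_of_pos hB (by linarith)
  set g : ℝ → ℝ := fun y => C * y ^ (q₁ - 2) + D * y ^ (q₂ - 2) with hg
  -- h y = C * y ^ (q₁ - q₂) + D, and g y = y ^ (q₂ - 2) * h y for y > 0
  set h : ℝ → ℝ := fun y => C * y ^ (q₁ - q₂) + D with hh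
  have hfac : ∀ y > (0 : ℝ), g y = y ^ (q₂ - 2) * h y := by
    intro y hy
    simp only [hg, hh]
    have he : q₂ - 2 + (q₁ - q₂) = q₁ - 2 := by ring
    rw [mul_add, show y ^ (q₂ - 2) * (C * y ^ (q₁ - q₂)) =
      C * (y ^ (q₂ - 2) * y ^ (q₁ - q₂)) by ring, ← Real.rpow_add hy, he]
    ring
  -- monotonicity lemmas
  have key : ∀ a b : ℝ, 0 < a → a ≤ b →
      ∃ m ∈ Set.Icc a b, MonotoneOn (fun y => A * y ^ (q₁ - 1) + B * y ^ (q₂ - 1) + c)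
        (Set.Icc a m) ∧ AntitoneOn (fun y => A * y ^ (q₁ - 1) + B * y ^ (q₂ - 1) + c)
        (Set.Icc m b) := by
    intro a b ha hab
    have hcont : ∀ s t : ℝ, a ≤ s → s ≤ t → t ≤ b →
        ContinuousOn (fun y => A * y ^ (q₁ - 1) + B * y ^ (q₂ - 1) + c) (Set.Icc s t) := by
      intro s t hs hst htb
      intro y hy
      exact (part1 y (by have := hy.1; linarith)).continuousAt.continuousWithinAt
    have hmono : ∀ s t : ℝ, a ≤ s → s ≤ t → t ≤ b → (∀ y ∈ Set.Ioo s t, 0 ≤ g y) →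
        MonotoneOn (fun y => A * y ^ (q₁ - 1) + B * y ^ (q₂ - 1) + c) (Set.Icc s t) := by
      intro s t hs hst htb hsgn
      apply monotoneOn_of_deriv_nonneg (convex_Icc s t) (hcont s t hs hst htb)
      · intro y hy
        rw [interior_Icc] at hy
        exact (part1 y (by have := hy.1; linarith)).differentiableAt.differentiableWithinAt
      · intro y hy
        rw [interior_Icc] at hy
        rw [(part1 y (by have := hy.1; linarith)).deriv]
        exact hsgn y hy
    have hanti : ∀ s t : ℝ, a ≤ s → s ≤ t → t ≤ b → (∀ y ∈ Set.Ioo s t, g y ≤ 0) →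
        AntitoneOn (fun y => A * y ^ (q₁ - 1) + B * y ^ (q₂ - 1) + c) (Set.Icc s t) := by
      intro s t hs hst htb hsgn
      apply antitoneOn_of_deriv_nonpos (convex_Icc s t) (hcont s t hs hst htb)
      · intro y hy
        rw [interior_Icc] at hy
        exact (part1 y (by have := hy.1; linarith)).differentiableAt.differentiableWithinAt
      · intro y hy
        rw [interior_Icc] at hy
        rw [(part1 y (by have := hy.1; linarith)).deriv]
        exact hsgn y hy
    -- antitonicity of h on positives (when C ≥ 0)
    have hhanti : 0 ≤ C → ∀ s t : ℝ, 0 < s → s ≤ t → h t ≤ h s := by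
      intro hCpos s t hs hst
      simp only [hh]
      have := Real.rpow_le_rpow_of_nonpos hs hst (by linarith : q₁ - q₂ ≤ 0)
      nlinarith
    rcases le_or_gt C 0 with hC0 | hC0
    · -- g ≤ 0 everywhere on positives
      refine ⟨a, ⟨le_refl a, hab⟩, hmono a a le_rfl le_rfl hab (by simp), ?_⟩
      apply hanti a b le_rfl hab le_rfl
      intro y hy
      have hy0 : 0 < y := lt_trans ha hy.1
      have h1 : C * y ^ (q₁ - 2) ≤ 0 :=
        mul_nonpos_of_nonpos_of_nonneg hC0 (Real.rpow_pos_of_pos hy0 _).le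
      have h2 : D * y ^ (q₂ - 2) < 0 :=
        mul_neg_of_neg_of_pos hDneg (Real.rpow_pos_of_pos hy0 _)
      simp only [hg]; linarith
    · rcases le_or_gt (h a) 0 with hha | hha
      · -- antitone on [a,b]
        refine ⟨a, ⟨le_refl a, hab⟩, hmono a a le_rfl le_rfl hab (by simp), ?_⟩
        apply hanti a b le_rfl hab le_rfl
        intro y hy
        have hy0 : 0 < y := lt_trans ha hy.1
        rw [hfac y hy0]
        exact mul_nonpos_of_nonneg_of_nonpos (Real.rpow_pos_of_pos hy0 _).le
          (le_trans (hhanti hC0.le a y ha hy.1.le) hha)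
      · rcases le_or_gt 0 (h b) with hhb | hhb
        · -- monotone on [a,b]
          refine ⟨b, ⟨hab, le_refl b⟩, ?_, hanti b b hab le_rfl le_rfl (by simp)⟩
          apply hmono a b le_rfl hab le_rfl
          intro y hy
          have hy0 : 0 < y := lt_trans ha hy.1
          rw [hfac y hy0]
          exact mul_nonneg (Real.rpow_pos_of_pos hy0 _).le
            (le_trans hhb (hhanti hC0.le y b hy0 hy.2.le))
        · -- IVT: find m with h m = 0
          have hhc : ContinuousOn h (Set.Icc a b) := by
            apply ContinuousOn.add (ContinuousOn.mul continuousOn_const ?_) continuousOn_const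
            intro y hy
            exact (Real.continuousAt_rpow_const y (q₁ - q₂)
              (Or.inl (ne_of_gt (lt_of_lt_of_le ha hy.1)))).continuousWithinAt
          obtain ⟨m, hm, hm0⟩ := intermediate_value_Icc' hab hhc
            (Set.mem_Icc.mpr ⟨hhb.le, hha.le⟩)
          refine ⟨m, hm, ?_, ?_⟩
          · apply hmono a m le_rfl hm.1 hm.2
            intro y hy
            have hy0 : 0 < y := lt_trans ha hy.1
            rw [hfac y hy0]
            apply mul_nonneg (Real.rpow_pos_of_pos hy0 _).le
            rw [← hm0]
            exact hhanti hC0.le y m hy0 hy.2.le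
          · apply hanti m b hm.1 hm.2 le_rfl
            intro y hy
            have hy0 : 0 < y := lt_trans (lt_of_lt_of_le ha hm.1) hy.1
            rw [hfac y hy0]
            apply mul_nonpos_of_nonneg_of_nonpos (Real.rpow_pos_of_pos hy0 _).le
            rw [← hm0]
            exact hhanti hC0.le m y (lt_of_lt_of_le ha hm.1) hy.1.le
  have part3 : ∀ a b : ℝ, 0 < a → a ≤ b → ∀ y ∈ Set.Icc a b,
      min ((fun y => A * y ^ (q₁ - 1) + B * y ^ (q₂ - 1) + c) a)
        ((fun y => A * y ^ (q₁ - 1) + B * y ^ (q₂ - 1) + c) b) ≤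
        (fun y => A * y ^ (q₁ - 1) + B * y ^ (q₂ - 1) + c) y := by
    intro a b ha hab y hy
    obtain ⟨m, hm, hmono, hanti⟩ := key a b ha hab
    rcases le_or_gt y m with hym | hym
    · exact le_trans (min_le_left _ _)
        (hmono ⟨le_refl a, hm.1⟩ ⟨hy.1, hym⟩ hy.1)
    · exact le_trans (min_le_right _ _)
        (hanti ⟨hym.le, hy.2⟩ ⟨hm.2, le_refl b⟩ hy.2)
  refine ⟨part1, fun a b ha hab => Or.inr (Or.inr (key a b ha hab)), part3, ?_⟩
  intro a b ha hab hpa hpb y hy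
  exact lt_of_lt_of_le (lt_min hpa hpb) (part3 a b ha hab y hy)
end
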